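/- arXiv:math/0409599 — 2 statements merged into one kernel-verified Lean document; each statement's English description precedes it below -/
import Mathlib

section
/- In a weak bialgebra H, the map ε̄_s(h) = ε(1_{(2)}h)1_{(1)} restricts to an anti-algebra isomorphism H_t → H_s with inverse the restriction of ε_t, and ε̄_t(h) = ε(h1_{(1)})1_{(2)} restricts to an anti-algebra isomorphism H_s → H_t with inverse the restriction of ε_s. -/
open TensorProduct

structure WeakBialgebra (k H : Type*) [CommRing k] [Ring H] [Algebra k H] where
  comul : H →ₗ[k] H ⊗[k] H
  counit : H →ₗ[k] k
  coassoc : ∀ h : H, (TensorProduct.assoc k H H H) ((comul.rTensor H) (comul h)) =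
      (comul.lTensor H) (comul h)
  counit_left : ∀ h : H, (TensorProduct.lid k H) ((counit.rTensor H) (comul h)) = h
  counit_right : ∀ h : H, (TensorProduct.rid k H) ((counit.lTensor H) (comul h)) = h
  comul_mul : ∀ h g : H, comul (h * g) = comul h * comul g
  weak_unit_left : (comul.lTensor H) (comul 1) =
      (Algebra.TensorProduct.map (AlgHom.id k H)
        (Algebra.TensorProduct.includeLeft : H →ₐ[k] H ⊗[k] H)) (comul 1) *
      (Algebra.TensorProduct.includeRight : (H ⊗[k] H) →ₐ[k] H ⊗[k] (H ⊗[k] H)) (comul 1)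
  weak_unit_right : (comul.lTensor H) (comul 1) =
      (Algebra.TensorProduct.includeRight : (H ⊗[k] H) →ₐ[k] H ⊗[k] (H ⊗[k] H)) (comul 1) *
      (Algebra.TensorProduct.map (AlgHom.id k H)
        (Algebra.TensorProduct.includeLeft : H →ₐ[k] H ⊗[k] H)) (comul 1)
  weak_counit₁ : ∀ h g l : H, counit (h * g * l) =
      (LinearMap.mul' k k) ((TensorProduct.map counit counit)
        ((h ⊗ₜ[k] (1 : H)) * comul g * ((1 : H) ⊗ₜ[k] l)))
  weak_counit₂ : ∀ h g l : H, counit (h * g * l) =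
      (LinearMap.mul' k k) ((TensorProduct.map counit counit)
        ((h ⊗ₜ[k] (1 : H)) * (TensorProduct.comm k H H) (comul g) * ((1 : H) ⊗ₜ[k] l)))

namespace WeakBialgebra

variable {k H : Type*} [CommRing k] [Ring H] [Algebra k H] (W : WeakBialgebra k H)

/-- The target map `ε_t(h) = ε(1_{(1)}h)1_{(2)}`. -/
noncomputable def εt : H →ₗ[k] H :=
  (TensorProduct.lid k H).toLinearMap ∘ₗ (W.counit.rTensor H) ∘ₗ
    (LinearMap.mulLeft k (W.comul 1)) ∘ₗ
    (Algebra.TensorProduct.includeLeft : H →ₐ[k] H ⊗[k] H).toLinearMap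

/-- The source map `ε_s(h) = 1_{(1)}ε(h1_{(2)})`. -/
noncomputable def εs : H →ₗ[k] H :=
  (TensorProduct.rid k H).toLinearMap ∘ₗ (W.counit.lTensor H) ∘ₗ
    (LinearMap.mulRight k (W.comul 1)) ∘ₗ
    (Algebra.TensorProduct.includeRight : H →ₐ[k] H ⊗[k] H).toLinearMap

/-- `ε̄_t(h) = ε(h1_{(1)})1_{(2)}`. -/
noncomputable def εt' : H →ₗ[k] H :=
  (TensorProduct.lid k H).toLinearMap ∘ₗ (W.counit.rTensor H) ∘ₗ
    (LinearMap.mulRight k (W.comul 1)) ∘ₗ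
    (Algebra.TensorProduct.includeLeft : H →ₐ[k] H ⊗[k] H).toLinearMap

/-- `ε̄_s(h) = ε(1_{(2)}h)1_{(1)}`. -/
noncomputable def εs' : H →ₗ[k] H :=
  (TensorProduct.rid k H).toLinearMap ∘ₗ (W.counit.lTensor H) ∘ₗ
    (LinearMap.mulLeft k (W.comul 1)) ∘ₗ
    (Algebra.TensorProduct.includeRight : H →ₐ[k] H ⊗[k] H).toLinearMap

end WeakBialgebra

/-- A weak Hopf algebra: a weak bialgebra with an antipode. -/
structure WeakHopf (k H : Type*) [CommRing k] [Ring H] [Algebra k H] where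
  W : WeakBialgebra k H
  S : H →ₗ[k] H
  S_conv_id : ∀ h : H, (LinearMap.mul' k H) ((S.rTensor H) (W.comul h)) = W.εs h
  id_conv_S : ∀ h : H, (LinearMap.mul' k H) ((S.lTensor H) (W.comul h)) = W.εt h
  S_conv_id_conv_S : ∀ h : H, (LinearMap.mul' k H) ((LinearMap.lTensor H (LinearMap.mul' k H))
      ((TensorProduct.map S (TensorProduct.map LinearMap.id S))
        ((W.comul.lTensor H) (W.comul h)))) = S h

/-!
Everything is computed from a finite presentation `Δ(1) = ∑ 1₁ ⊗ 1₂`. The weak counit axiom with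
middle factor `1` yields the absorption rules `ε(x ε_t(y)) = ε(xy)`, `ε(ε_s(x) y) = ε(xy)`,
`ε(x ε̄_s(y)) = ε(xy)` and `ε(ε̄_t(x) y) = ε(xy)`. Contracting the weak unit axioms (and, for the
source side, coassociativity) with `ε` shows `Δ(1) ∈ H ⊗ H_t` and `Δ(1) ∈ H_s ⊗ H`; together these
give all the relations `ε_t ∘ ε̄_s = ε_t`, `ε̄_s ∘ ε_s = ε_s`, ... between the four maps. Contracting
with other functionals gives `Δ(x) = 1₁x ⊗ 1₂ = x1₁ ⊗ 1₂` for `x ∈ H_t` (and the analogue for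
`H_s`), so `H_t`, `H_s` are closed under multiplication and commute with each other. Since
`ε̄_s ∘ ε_t` is the identity on `H_s`, anti-multiplicativity of `ε̄_s` on `H_t` reduces to
`ε_t(ε̄_s(y) ε̄_s(x)) = ε_t(xy)`, which follows from absorption and commutation.
-/

namespace TensorProduct

variable {R M N ι : Type*} [CommSemiring R] [AddCommMonoid M] [Module R M]
  [AddCommMonoid N] [Module R N]

lemma sum_smul_eq_of_sum_tmul_eq {s : Finset ι} {a : ι → M} {x y : ι → N}
    (h : ∑ i ∈ s, a i ⊗ₜ[R] x i = ∑ i ∈ s, a i ⊗ₜ[R] y i) (f : M →ₗ[R] R) :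
    ∑ i ∈ s, f (a i) • x i = ∑ i ∈ s, f (a i) • y i := by
  simpa using congrArg (fun t => TensorProduct.lid R N (f.rTensor N t)) h

lemma sum_smul_eq_of_sum_tmul_eq' {s : Finset ι} {a b : ι → M} {x : ι → N}
    (h : ∑ i ∈ s, a i ⊗ₜ[R] x i = ∑ i ∈ s, b i ⊗ₜ[R] x i) (g : N →ₗ[R] R) :
    ∑ i ∈ s, g (x i) • a i = ∑ i ∈ s, g (x i) • b i := by
  simpa using congrArg (fun t => TensorProduct.rid R M (g.lTensor M t)) h

end TensorProduct

namespace WeakBialgebra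

variable {k H : Type*} [CommRing k] [Ring H] [Algebra k H] (W : WeakBialgebra k H)

lemma εt_apply (h : H) : W.εt h =
    TensorProduct.lid k H (W.counit.rTensor H (W.comul 1 * (h ⊗ₜ[k] 1))) := rfl

lemma εs_apply (h : H) : W.εs h =
    TensorProduct.rid k H (W.counit.lTensor H ((1 ⊗ₜ[k] h) * W.comul 1)) := rfl

lemma εt'_apply (h : H) : W.εt' h =
    TensorProduct.lid k H (W.counit.rTensor H ((h ⊗ₜ[k] 1) * W.comul 1)) := rfl

lemma εs'_apply (h : H) : W.εs' h =
    TensorProduct.rid k H (W.counit.lTensor H (W.comul 1 * (1 ⊗ₜ[k] h))) := rfl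

lemma εt'_one : W.εt' 1 = 1 := by
  rw [εt'_apply, ← Algebra.TensorProduct.one_def, one_mul]
  exact W.counit_left 1

lemma εs'_one : W.εs' 1 = 1 := by
  rw [εs'_apply, ← Algebra.TensorProduct.one_def, mul_one]
  exact W.counit_right 1

section UnitRep

variable {W} {S : Finset (H × H)} (hS : W.comul 1 = ∑ i ∈ S, i.1 ⊗ₜ[k] i.2)
include hS

lemma εt_eq_sum (h : H) : W.εt h = ∑ i ∈ S, W.counit (i.1 * h) • i.2 := by
  simp [εt_apply, hS, Finset.sum_mul, Algebra.TensorProduct.tmul_mul_tmul]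

lemma εs_eq_sum (h : H) : W.εs h = ∑ i ∈ S, W.counit (h * i.2) • i.1 := by
  simp [εs_apply, hS, Finset.mul_sum, Algebra.TensorProduct.tmul_mul_tmul]

lemma εt'_eq_sum (h : H) : W.εt' h = ∑ i ∈ S, W.counit (h * i.1) • i.2 := by
  simp [εt'_apply, hS, Finset.mul_sum, Algebra.TensorProduct.tmul_mul_tmul]

lemma εs'_eq_sum (h : H) : W.εs' h = ∑ i ∈ S, W.counit (i.2 * h) • i.1 := by
  simp [εs'_apply, hS, Finset.sum_mul, Algebra.TensorProduct.tmul_mul_tmul]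

lemma counit_mul_eq_sum (x y : H) :
    W.counit (x * y) = ∑ i ∈ S, W.counit (x * i.1) * W.counit (i.2 * y) := by
  simpa [hS, Finset.mul_sum, Finset.sum_mul, Algebra.TensorProduct.tmul_mul_tmul]
    using W.weak_counit₁ x 1 y

lemma counit_mul_eq_sum' (x y : H) :
    W.counit (x * y) = ∑ i ∈ S, W.counit (x * i.2) * W.counit (i.1 * y) := by
  simpa [hS, Finset.mul_sum, Finset.sum_mul, Algebra.TensorProduct.tmul_mul_tmul]
    using W.weak_counit₂ x 1 y

lemma sum_tmul_comul :
    ∑ i ∈ S, i.1 ⊗ₜ[k] W.comul i.2 = ∑ i ∈ S, i.1 ⊗ₜ[k] (W.comul 1 * (i.2 ⊗ₜ[k] 1)) := by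
  have h := W.weak_unit_right
  simp only [hS, map_sum, LinearMap.lTensor_tmul] at h
  rw [h, Finset.sum_mul_sum, Finset.sum_comm, hS]
  simp [Algebra.TensorProduct.tmul_mul_tmul, Finset.sum_mul, TensorProduct.tmul_sum]

lemma sum_tmul_comul' :
    ∑ i ∈ S, i.1 ⊗ₜ[k] W.comul i.2 = ∑ i ∈ S, i.1 ⊗ₜ[k] ((i.2 ⊗ₜ[k] 1) * W.comul 1) := by
  have h := W.weak_unit_left
  simp only [hS, map_sum, LinearMap.lTensor_tmul] at h
  rw [h, Finset.sum_mul_sum, hS]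
  simp [Algebra.TensorProduct.tmul_mul_tmul, Finset.mul_sum, TensorProduct.tmul_sum]

lemma sum_comul_tmul :
    ∑ i ∈ S, W.comul i.1 ⊗ₜ[k] i.2 = ∑ i ∈ S, ((1 ⊗ₜ[k] i.1) * W.comul 1) ⊗ₜ[k] i.2 := by
  apply (TensorProduct.assoc k H H H).injective
  have h := W.coassoc 1
  simp only [hS, map_sum, LinearMap.rTensor_tmul, LinearMap.lTensor_tmul] at h
  rw [map_sum, h, sum_tmul_comul hS, hS]
  simp only [Finset.mul_sum, Finset.sum_mul, map_sum, tmul_sum, sum_tmul, assoc_tmul,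
    Algebra.TensorProduct.tmul_mul_tmul, one_mul, mul_one]
  exact Finset.sum_comm

lemma sum_comul_tmul' :
    ∑ i ∈ S, W.comul i.1 ⊗ₜ[k] i.2 = ∑ i ∈ S, (W.comul 1 * (1 ⊗ₜ[k] i.1)) ⊗ₜ[k] i.2 := by
  apply (TensorProduct.assoc k H H H).injective
  have h := W.coassoc 1
  simp only [hS, map_sum, LinearMap.rTensor_tmul, LinearMap.lTensor_tmul] at h
  rw [map_sum, h, sum_tmul_comul' hS, hS]
  simp only [Finset.mul_sum, Finset.sum_mul, map_sum, tmul_sum, sum_tmul, assoc_tmul,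
    Algebra.TensorProduct.tmul_mul_tmul, one_mul, mul_one]
  exact Finset.sum_comm

lemma sum_tmul_εt : ∑ i ∈ S, i.1 ⊗ₜ[k] W.εt i.2 = ∑ i ∈ S, i.1 ⊗ₜ[k] i.2 := by
  have h := congrArg (LinearMap.lTensor H
    ((TensorProduct.lid k H).toLinearMap ∘ₗ W.counit.rTensor H)) (sum_tmul_comul hS)
  simp only [map_sum, LinearMap.lTensor_tmul, LinearMap.comp_apply, LinearEquiv.coe_coe,
    W.counit_left] at h
  exact h.symm

lemma sum_tmul_εt' : ∑ i ∈ S, i.1 ⊗ₜ[k] W.εt' i.2 = ∑ i ∈ S, i.1 ⊗ₜ[k] i.2 := by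
  have h := congrArg (LinearMap.lTensor H
    ((TensorProduct.lid k H).toLinearMap ∘ₗ W.counit.rTensor H)) (sum_tmul_comul' hS)
  simp only [map_sum, LinearMap.lTensor_tmul, LinearMap.comp_apply, LinearEquiv.coe_coe,
    W.counit_left] at h
  exact h.symm

lemma sum_εs_tmul : ∑ i ∈ S, W.εs i.1 ⊗ₜ[k] i.2 = ∑ i ∈ S, i.1 ⊗ₜ[k] i.2 := by
  have h := congrArg (LinearMap.rTensor H
    ((TensorProduct.rid k H).toLinearMap ∘ₗ W.counit.lTensor H)) (sum_comul_tmul hS)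
  simp only [map_sum, LinearMap.rTensor_tmul, LinearMap.comp_apply, LinearEquiv.coe_coe,
    W.counit_right] at h
  exact h.symm

lemma sum_εs'_tmul : ∑ i ∈ S, W.εs' i.1 ⊗ₜ[k] i.2 = ∑ i ∈ S, i.1 ⊗ₜ[k] i.2 := by
  have h := congrArg (LinearMap.rTensor H
    ((TensorProduct.rid k H).toLinearMap ∘ₗ W.counit.lTensor H)) (sum_comul_tmul' hS)
  simp only [map_sum, LinearMap.rTensor_tmul, LinearMap.comp_apply, LinearEquiv.coe_coe,
    W.counit_right] at h
  exact h.symm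

end UnitRep

lemma counit_mul_εt (x y : H) : W.counit (x * W.εt y) = W.counit (x * y) := by
  obtain ⟨S, hS⟩ := TensorProduct.exists_finset (W.comul 1)
  rw [εt_eq_sum hS, counit_mul_eq_sum' hS x y]
  simp [Finset.mul_sum, mul_comm]

lemma counit_εs_mul (x y : H) : W.counit (W.εs x * y) = W.counit (x * y) := by
  obtain ⟨S, hS⟩ := TensorProduct.exists_finset (W.comul 1)
  rw [εs_eq_sum hS, counit_mul_eq_sum' hS x y]
  simp [Finset.sum_mul]

lemma counit_mul_εs' (x y : H) : W.counit (x * W.εs' y) = W.counit (x * y) := by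
  obtain ⟨S, hS⟩ := TensorProduct.exists_finset (W.comul 1)
  rw [εs'_eq_sum hS, counit_mul_eq_sum hS x y]
  simp [Finset.mul_sum, mul_comm]

lemma counit_εt'_mul (x y : H) : W.counit (W.εt' x * y) = W.counit (x * y) := by
  obtain ⟨S, hS⟩ := TensorProduct.exists_finset (W.comul 1)
  rw [εt'_eq_sum hS, counit_mul_eq_sum hS x y]
  simp [Finset.sum_mul]

lemma εt_εt (h : H) : W.εt (W.εt h) = W.εt h := by
  obtain ⟨S, hS⟩ := TensorProduct.exists_finset (W.comul 1)
  simp only [εt_eq_sum hS (W.εt _), counit_mul_εt, ← εt_eq_sum hS]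

lemma εs_εs (h : H) : W.εs (W.εs h) = W.εs h := by
  obtain ⟨S, hS⟩ := TensorProduct.exists_finset (W.comul 1)
  simp only [εs_eq_sum hS (W.εs _), counit_εs_mul, ← εs_eq_sum hS]

lemma εs'_εt (h : H) : W.εs' (W.εt h) = W.εs' h := by
  obtain ⟨S, hS⟩ := TensorProduct.exists_finset (W.comul 1)
  simp only [εs'_eq_sum hS, counit_mul_εt]

lemma εt'_εs (h : H) : W.εt' (W.εs h) = W.εt' h := by
  obtain ⟨S, hS⟩ := TensorProduct.exists_finset (W.comul 1)
  simp only [εt'_eq_sum hS, counit_εs_mul]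

lemma εt_εs' (h : H) : W.εt (W.εs' h) = W.εt h := by
  obtain ⟨S, hS⟩ := TensorProduct.exists_finset (W.comul 1)
  simp only [εt_eq_sum hS, counit_mul_εs']

lemma εs_εt' (h : H) : W.εs (W.εt' h) = W.εs h := by
  obtain ⟨S, hS⟩ := TensorProduct.exists_finset (W.comul 1)
  simp only [εs_eq_sum hS, counit_εt'_mul]

lemma εt_mul_εt (g h : H) : W.εt (g * W.εt h) = W.εt (g * h) := by
  obtain ⟨S, hS⟩ := TensorProduct.exists_finset (W.comul 1)
  simp only [εt_eq_sum hS (_ * _), ← mul_assoc, counit_mul_εt]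

lemma εs_εs_mul (g h : H) : W.εs (W.εs g * h) = W.εs (g * h) := by
  obtain ⟨S, hS⟩ := TensorProduct.exists_finset (W.comul 1)
  simp only [εs_eq_sum hS (_ * _), mul_assoc, counit_εs_mul]

lemma εt_εt' (h : H) : W.εt (W.εt' h) = W.εt' h := by
  obtain ⟨S, hS⟩ := TensorProduct.exists_finset (W.comul 1)
  rw [εt'_eq_sum hS, map_sum]
  simp only [map_smul]
  exact sum_smul_eq_of_sum_tmul_eq (sum_tmul_εt hS) (W.counit ∘ₗ LinearMap.mulLeft k h)

lemma εt'_εt (h : H) : W.εt' (W.εt h) = W.εt h := by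
  obtain ⟨S, hS⟩ := TensorProduct.exists_finset (W.comul 1)
  rw [εt_eq_sum hS, map_sum]
  simp only [map_smul]
  exact sum_smul_eq_of_sum_tmul_eq (sum_tmul_εt' hS) (W.counit ∘ₗ LinearMap.mulRight k h)

lemma εs_εs' (h : H) : W.εs (W.εs' h) = W.εs' h := by
  obtain ⟨S, hS⟩ := TensorProduct.exists_finset (W.comul 1)
  rw [εs'_eq_sum hS, map_sum]
  simp only [map_smul]
  exact sum_smul_eq_of_sum_tmul_eq' (sum_εs_tmul hS) (W.counit ∘ₗ LinearMap.mulRight k h)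

lemma εs'_εs (h : H) : W.εs' (W.εs h) = W.εs h := by
  obtain ⟨S, hS⟩ := TensorProduct.exists_finset (W.comul 1)
  rw [εs_eq_sum hS, map_sum]
  simp only [map_smul]
  exact sum_smul_eq_of_sum_tmul_eq' (sum_εs'_tmul hS) (W.counit ∘ₗ LinearMap.mulLeft k h)

lemma comul_εt (h : H) : W.comul (W.εt h) = W.comul 1 * (W.εt h ⊗ₜ[k] 1) := by
  obtain ⟨S, hS⟩ := TensorProduct.exists_finset (W.comul 1)
  rw [εt_eq_sum hS, map_sum, TensorProduct.sum_tmul, Finset.mul_sum]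
  simp only [map_smul, ← TensorProduct.smul_tmul', mul_smul_comm]
  exact sum_smul_eq_of_sum_tmul_eq (sum_tmul_comul hS) (W.counit ∘ₗ LinearMap.mulRight k h)

lemma comul_εt' (h : H) : W.comul (W.εt h) = (W.εt h ⊗ₜ[k] 1) * W.comul 1 := by
  obtain ⟨S, hS⟩ := TensorProduct.exists_finset (W.comul 1)
  rw [εt_eq_sum hS, map_sum, TensorProduct.sum_tmul, Finset.sum_mul]
  simp only [map_smul, ← TensorProduct.smul_tmul', smul_mul_assoc]
  exact sum_smul_eq_of_sum_tmul_eq (sum_tmul_comul' hS) (W.counit ∘ₗ LinearMap.mulRight k h)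

lemma comul_εs (h : H) : W.comul (W.εs h) = (1 ⊗ₜ[k] W.εs h) * W.comul 1 := by
  obtain ⟨S, hS⟩ := TensorProduct.exists_finset (W.comul 1)
  rw [εs_eq_sum hS, map_sum, TensorProduct.tmul_sum, Finset.sum_mul]
  simp only [map_smul, TensorProduct.tmul_smul, smul_mul_assoc]
  exact sum_smul_eq_of_sum_tmul_eq' (sum_comul_tmul hS) (W.counit ∘ₗ LinearMap.mulLeft k h)

lemma commute_εt_εs (u v : H) : Commute (W.εt u) (W.εs v) := by
  obtain ⟨S, hS⟩ := TensorProduct.exists_finset (W.comul 1)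
  have hx := (W.comul_εt u).symm.trans (W.comul_εt' u)
  simp only [hS, Finset.sum_mul, Finset.mul_sum, Algebra.TensorProduct.tmul_mul_tmul, mul_one,
    one_mul] at hx
  have h := sum_smul_eq_of_sum_tmul_eq' hx (W.counit ∘ₗ LinearMap.mulLeft k v)
  simp only [LinearMap.comp_apply, LinearMap.mulLeft_apply] at h
  rw [Commute, SemiconjBy, εs_eq_sum hS, Finset.mul_sum, Finset.sum_mul]
  simp only [mul_smul_comm, smul_mul_assoc]
  exact h.symm

lemma εt_εt_mul_εt (u v : H) : W.εt (W.εt u * W.εt v) = W.εt u * W.εt v := by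
  have hΔ : W.comul (W.εt u * W.εt v) = W.comul 1 * ((W.εt u * W.εt v) ⊗ₜ[k] 1) := by
    rw [W.comul_mul, W.comul_εt v, ← mul_assoc, ← W.comul_mul, mul_one, W.comul_εt u,
      mul_assoc, Algebra.TensorProduct.tmul_mul_tmul, mul_one]
  rw [εt_apply, ← hΔ]
  exact W.counit_left _

lemma εs_εs_mul_εs (u v : H) : W.εs (W.εs u * W.εs v) = W.εs u * W.εs v := by
  have hΔ : W.comul (W.εs u * W.εs v) = (1 ⊗ₜ[k] (W.εs u * W.εs v)) * W.comul 1 := by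
    rw [W.comul_mul, W.comul_εs u, mul_assoc, ← W.comul_mul, one_mul, W.comul_εs v,
      ← mul_assoc, Algebra.TensorProduct.tmul_mul_tmul, one_mul]
  rw [εs_apply, ← hΔ]
  exact W.counit_right _

lemma εs'_εt_mul_εt (u v : H) :
    W.εs' (W.εt u * W.εt v) = W.εs' (W.εt v) * W.εs' (W.εt u) := by
  set x := W.εt u
  set y := W.εt v
  set a := W.εs' y
  set b := W.εs' x
  have ha : W.εs a = a := W.εs_εs' y
  have hb : W.εs b = b := W.εs_εs' x
  have hab : W.εs (a * b) = a * b := by simpa only [ha, hb] using W.εs_εs_mul_εs a b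
  have hεt : W.εt (a * b) = W.εt (x * y) := calc
    W.εt (a * b) = W.εt (a * W.εt b) := (W.εt_mul_εt a b).symm
    _ = W.εt (a * x) := by rw [εt_εs', εt_εt]
    _ = W.εt (x * a) := by rw [← ha, (W.commute_εt_εs u a).eq]
    _ = W.εt (x * W.εt a) := (W.εt_mul_εt x a).symm
    _ = W.εt (x * y) := by rw [εt_εs', εt_εt]
  calc W.εs' (x * y) = W.εs' (W.εt (a * b)) := by rw [hεt, εs'_εt]
    _ = W.εs' (W.εs (a * b)) := by rw [εs'_εt, hab]
    _ = a * b := by rw [εs'_εs, hab]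

lemma εt'_εs_mul_εs (u v : H) :
    W.εt' (W.εs u * W.εs v) = W.εt' (W.εs v) * W.εt' (W.εs u) := by
  set x := W.εs u
  set y := W.εs v
  set a := W.εt' y
  set b := W.εt' x
  have ha : W.εt a = a := W.εt_εt' y
  have hb : W.εt b = b := W.εt_εt' x
  have hab : W.εt (a * b) = a * b := by simpa only [ha, hb] using W.εt_εt_mul_εt a b
  have hεs : W.εs (a * b) = W.εs (x * y) := calc
    W.εs (a * b) = W.εs (W.εs a * b) := (W.εs_εs_mul a b).symm
    _ = W.εs (y * b) := by rw [εs_εt', εs_εs]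
    _ = W.εs (b * y) := by rw [← hb, (W.commute_εt_εs b v).eq]
    _ = W.εs (W.εs b * y) := (W.εs_εs_mul b y).symm
    _ = W.εs (x * y) := by rw [εs_εt', εs_εs]
  calc W.εt' (x * y) = W.εt' (W.εs (a * b)) := by rw [hεs, εt'_εs]
    _ = W.εt' (W.εt (a * b)) := by rw [εt'_εs, hab]
    _ = a * b := by rw [εt'_εt, hab]

end WeakBialgebra

/-- `ε̄_s` restricts to an anti-algebra isomorphism `H_t → H_s` with inverse `ε_t`,
and `ε̄_t` restricts to an anti-algebra isomorphism `H_s → H_t` with inverse `ε_s`. -/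
theorem weakBialgebra_antiIso_target_source
    {k H : Type*} [CommRing k] [Ring H] [Algebra k H] (W : WeakBialgebra k H) :
    (∀ x ∈ Set.range W.εt, W.εs' x ∈ Set.range W.εs) ∧
    (∀ x ∈ Set.range W.εt, W.εt (W.εs' x) = x) ∧
    (∀ y ∈ Set.range W.εs, W.εs' (W.εt y) = y) ∧
    (∀ x ∈ Set.range W.εt, ∀ y ∈ Set.range W.εt, W.εs' (x * y) = W.εs' y * W.εs' x) ∧
    W.εs' 1 = 1 ∧
    (∀ y ∈ Set.range W.εs, W.εt' y ∈ Set.range W.εt) ∧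
    (∀ y ∈ Set.range W.εs, W.εs (W.εt' y) = y) ∧
    (∀ x ∈ Set.range W.εt, W.εt' (W.εs x) = x) ∧
    (∀ x ∈ Set.range W.εs, ∀ y ∈ Set.range W.εs, W.εt' (x * y) = W.εt' y * W.εt' x) ∧
    W.εt' 1 = 1 := by
  refine ⟨?_, ?_, ?_, ?_, W.εs'_one, ?_, ?_, ?_, ?_, W.εt'_one⟩
  · rintro _ ⟨u, rfl⟩
    exact ⟨_, W.εs_εs' _⟩
  · rintro _ ⟨u, rfl⟩
    rw [W.εt_εs', W.εt_εt]
  · rintro _ ⟨v, rfl⟩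
    rw [W.εs'_εt, W.εs'_εs]
  · rintro _ ⟨u, rfl⟩ _ ⟨v, rfl⟩
    exact W.εs'_εt_mul_εt u v
  · rintro _ ⟨v, rfl⟩
    exact ⟨_, W.εt_εt' _⟩
  · rintro _ ⟨v, rfl⟩
    rw [W.εs_εt', W.εs_εs]
  · rintro _ ⟨u, rfl⟩
    rw [W.εt'_εs, W.εt'_εt]
  · rintro _ ⟨u, rfl⟩ _ ⟨v, rfl⟩
    exact W.εt'_εs_mul_εs u v
end

section
/- Let H be a weak bialgebra and M, N left H-modules. The projection π : M ⊗ N → Δ(1)(M ⊗ N), π(m ⊗ n) = 1_{(1)}m ⊗ 1_{(2)}n, induces an isomorphism M ⊗_{H_t} N ≅ Δ(1)(M ⊗ N), where the right H_t-module structure on M is given by m·z = ε̄_s(z)m with ε̄_s(z) = ε(1_{(2)}z)1_{(1)}. -/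
/-!
Let `P` be the action of `Δ(1)` on `M ⊗ N`. For `z = εₜ(h) ∈ H_t` one has
`Δ(1)(ε̄ₛ(z) ⊗ 1) = (ε̄ₛ ⊗ id)Δ(z) = Δ(1)(1 ⊗ z)`: the first equality combines
`Δ(z) = Δ(1)(z ⊗ 1)` with the multiplicativity `ε̄ₛ(ε̄ₛ(a)b) = ε̄ₛ(a)ε̄ₛ(b)`, the second is
`(ε̄ₛ ⊗ id)Δ(h) = Δ(1)(1 ⊗ h)`. So `P` kills the balancing relations. Conversely
`∑ ε̄ₛ(εₜ(1₍₂₎))1₍₁₎ = 1` and `1₍₁₎ ⊗ εₜ(1₍₂₎) = Δ(1)` write `x - P x` as a sum of balancing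
relations. Hence the relations span exactly `ker P`, and the first isomorphism theorem
identifies the quotient with `im P`.
-/

open TensorProduct

section Modules

variable {k H M : Type*} [CommRing k] [Ring H] [Algebra k H]
  [AddCommGroup M] [Module k M] [Module H M] [IsScalarTower k H M]

/-- The `k`-linear endomorphism of `M` given by the action of `b : H`. -/
def lsmulM (b : H) : M →ₗ[k] M where
  toFun m := b • m
  map_add' := smul_add b
  map_smul' c m := by
    simp only [RingHom.id_apply]
    rw [← algebraMap_smul H c m, ← algebraMap_smul H c (b • m), smul_smul, smul_smul,
      Algebra.commutes]

/-- The action `H →ₗ[k] End(M)` as a bundled linear map. -/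
def lsmulL : H →ₗ[k] M →ₗ[k] M where
  toFun := lsmulM
  map_add' b b' := by ext m; simp [lsmulM, add_smul]
  map_smul' c b := by ext m; simp [lsmulM, smul_assoc]

end Modules

namespace Algebra.TensorProduct

variable {R A B : Type*} [CommSemiring R] [Semiring A] [Semiring B] [Algebra R A] [Algebra R B]

theorem mul_tmul_one_eq_rTensor (x : A ⊗[R] B) (a : A) :
    x * (a ⊗ₜ[R] (1 : B)) = (LinearMap.mulRight R a).rTensor B x := by
  induction x using TensorProduct.induction_on with
  | zero => simp
  | tmul c d => simp
  | add p q hp hq => rw [add_mul, hp, hq, map_add]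

theorem mul_one_tmul_eq_lTensor (x : A ⊗[R] B) (b : B) :
    x * ((1 : A) ⊗ₜ[R] b) = (LinearMap.mulRight R b).lTensor A x := by
  induction x using TensorProduct.induction_on with
  | zero => simp
  | tmul c d => simp
  | add p q hp hq => rw [add_mul, hp, hq, map_add]

end Algebra.TensorProduct

theorem LinearMap.ker_eq_of_le_ker_of_sub_mem {R V : Type*} [Ring R] [AddCommGroup V] [Module R V]
    {f : V →ₗ[R] V} {p : Submodule R V} (hle : p ≤ LinearMap.ker f) (hsub : ∀ x, x - f x ∈ p) :
    LinearMap.ker f = p :=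
  le_antisymm (fun x hx => by simpa [LinearMap.mem_ker.mp hx] using hsub x) hle

namespace WeakBialgebra

variable {k H : Type*} [CommRing k] [Ring H] [Algebra k H] (W : WeakBialgebra k H)
variable {ι : Type*} {s : Finset ι} {u v : ι → H}

noncomputable def lcounit : H ⊗[k] H →ₗ[k] H :=
  (TensorProduct.lid k H).toLinearMap ∘ₗ W.counit.rTensor H

noncomputable def rcounit : H ⊗[k] H →ₗ[k] H :=
  (TensorProduct.rid k H).toLinearMap ∘ₗ W.counit.lTensor H

@[simp]
theorem lcounit_tmul (a b : H) : W.lcounit (a ⊗ₜ[k] b) = W.counit a • b := by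
  simp [lcounit]

@[simp]
theorem rcounit_tmul (a b : H) : W.rcounit (a ⊗ₜ[k] b) = W.counit b • a := by
  simp [rcounit]

@[simp]
theorem lcounit_comul (h : H) : W.lcounit (W.comul h) = h := W.counit_left h

@[simp]
theorem rcounit_comul (h : H) : W.rcounit (W.comul h) = h := W.counit_right h

theorem εs'_eq_rcounit (h : H) :
    W.εs' h = W.rcounit (W.comul 1 * ((1 : H) ⊗ₜ[k] h)) := rfl

theorem comul_one_mul_comul (h : H) : W.comul 1 * W.comul h = W.comul h := by
  rw [← W.comul_mul, one_mul]

noncomputable def counitForm (x b : H) : H ⊗[k] H →ₗ[k] k :=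
  LinearMap.mul' k k ∘ₗ
    TensorProduct.map (W.counit ∘ₗ LinearMap.mulLeft k x) (W.counit ∘ₗ LinearMap.mulRight k b)

@[simp]
theorem counitForm_tmul (x b c d : H) :
    W.counitForm x b (c ⊗ₜ[k] d) = W.counit (x * c) * W.counit (d * b) := by
  simp [counitForm]

theorem counit_mul_mul (x g b : H) :
    W.counit (x * g * b) = W.counitForm x b (W.comul g) := by
  rw [W.weak_counit₁]
  induction W.comul g using TensorProduct.induction_on with
  | zero => simp
  | tmul c d => simp [Algebra.TensorProduct.tmul_mul_tmul]
  | add p q hp hq => simp only [mul_add, add_mul, map_add, hp, hq]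

section

variable {W}

theorem εt_eq_sum_s9 (hrep : W.comul 1 = ∑ i ∈ s, u i ⊗ₜ[k] v i) (h : H) :
    W.εt h = ∑ i ∈ s, W.counit (u i * h) • v i := by
  simp only [WeakBialgebra.εt, LinearMap.coe_comp, Function.comp_apply,
    AlgHom.toLinearMap_apply, Algebra.TensorProduct.includeLeft_apply,
    LinearMap.mulLeft_apply, hrep, Finset.sum_mul, Algebra.TensorProduct.tmul_mul_tmul,
    mul_one, map_sum, LinearMap.rTensor_tmul, LinearEquiv.coe_coe, lid_tmul]

theorem εs'_eq_sum_s9 (hrep : W.comul 1 = ∑ i ∈ s, u i ⊗ₜ[k] v i) (h : H) :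
    W.εs' h = ∑ i ∈ s, W.counit (v i * h) • u i := by
  simp only [WeakBialgebra.εs', LinearMap.coe_comp, Function.comp_apply,
    AlgHom.toLinearMap_apply, Algebra.TensorProduct.includeRight_apply,
    LinearMap.mulLeft_apply, hrep, Finset.sum_mul, Algebra.TensorProduct.tmul_mul_tmul,
    mul_one, map_sum, LinearMap.lTensor_tmul, LinearEquiv.coe_coe, rid_tmul]

theorem sum_tmul_comul_eq_left (hrep : W.comul 1 = ∑ i ∈ s, u i ⊗ₜ[k] v i) :
    ∑ i ∈ s, u i ⊗ₜ[k] W.comul (v i) =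
      ∑ i ∈ s, ∑ j ∈ s, u i ⊗ₜ[k] ((v i * u j) ⊗ₜ[k] v j) := by
  have h := W.weak_unit_left
  rw [hrep] at h
  simpa only [map_sum, LinearMap.lTensor_tmul, Algebra.TensorProduct.map_tmul,
    AlgHom.coe_id, id_eq, Algebra.TensorProduct.includeLeft_apply,
    Algebra.TensorProduct.includeRight_apply, Finset.sum_mul_sum,
    Algebra.TensorProduct.tmul_mul_tmul, one_mul, mul_one] using h

theorem sum_tmul_comul_eq_right (hrep : W.comul 1 = ∑ i ∈ s, u i ⊗ₜ[k] v i) :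
    ∑ i ∈ s, u i ⊗ₜ[k] W.comul (v i) =
      ∑ i ∈ s, ∑ j ∈ s, u i ⊗ₜ[k] ((u j * v i) ⊗ₜ[k] v j) := by
  have h := W.weak_unit_right
  rw [hrep] at h
  simp only [map_sum, LinearMap.lTensor_tmul, Algebra.TensorProduct.map_tmul,
    AlgHom.coe_id, id_eq, Algebra.TensorProduct.includeLeft_apply,
    Algebra.TensorProduct.includeRight_apply, Finset.sum_mul_sum,
    Algebra.TensorProduct.tmul_mul_tmul, one_mul, mul_one] at h
  rw [h, Finset.sum_comm]

theorem sum_comul_tmul_eq_of_sum_tmul_comul_eq (hrep : W.comul 1 = ∑ i ∈ s, u i ⊗ₜ[k] v i)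
    {t : ι → ι → H} (h : ∑ i ∈ s, u i ⊗ₜ[k] W.comul (v i) =
      ∑ i ∈ s, ∑ j ∈ s, u i ⊗ₜ[k] (t i j ⊗ₜ[k] v j)) :
    ∑ i ∈ s, W.comul (u i) ⊗ₜ[k] v i = ∑ i ∈ s, ∑ j ∈ s, (u i ⊗ₜ[k] t i j) ⊗ₜ[k] v j := by
  have hc := congrArg (TensorProduct.assoc k H H H).symm (W.coassoc 1)
  rw [LinearEquiv.symm_apply_apply, hrep] at hc
  simpa only [map_sum, LinearMap.rTensor_tmul, LinearMap.lTensor_tmul, h,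
    assoc_symm_tmul] using hc

end

theorem lTensor_εt_comul_one : W.εt.lTensor H (W.comul 1) = W.comul 1 := by
  obtain ⟨S, hrep⟩ := TensorProduct.exists_finset (W.comul 1)
  have h := congrArg (W.lcounit.lTensor H) (sum_tmul_comul_eq_right hrep)
  simp only [map_sum, LinearMap.lTensor_tmul, lcounit_comul, lcounit_tmul] at h
  rw [hrep, map_sum, h]
  refine Finset.sum_congr rfl fun i _ => ?_
  rw [LinearMap.lTensor_tmul, εt_eq_sum_s9 hrep, tmul_sum]

theorem rTensor_εs'_comul_one : W.εs'.rTensor H (W.comul 1) = W.comul 1 := by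
  obtain ⟨S, hrep⟩ := TensorProduct.exists_finset (W.comul 1)
  have h := congrArg (W.lcounit.lTensor H) (sum_tmul_comul_eq_left hrep)
  simp only [map_sum, LinearMap.lTensor_tmul, lcounit_comul, lcounit_tmul] at h
  rw [hrep, map_sum, h, Finset.sum_comm]
  refine Finset.sum_congr rfl fun j _ => ?_
  rw [LinearMap.rTensor_tmul, εs'_eq_sum_s9 hrep, sum_tmul]
  simp_rw [tmul_smul, smul_tmul']

theorem comul_εs'_eq_comul_one_mul (a : H) :
    W.comul (W.εs' a) = W.comul 1 * ((1 : H) ⊗ₜ[k] W.εs' a) := by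
  obtain ⟨S, hrep⟩ := TensorProduct.exists_finset (W.comul 1)
  have h := congrArg ((TensorProduct.rid k (H ⊗[k] H)).toLinearMap ∘ₗ
      (W.counit ∘ₗ LinearMap.mulRight k a).lTensor (H ⊗[k] H))
    (sum_comul_tmul_eq_of_sum_tmul_comul_eq hrep (sum_tmul_comul_eq_left hrep))
  simp only [map_sum, LinearMap.coe_comp, Function.comp_apply, LinearMap.lTensor_tmul,
    LinearMap.mulRight_apply, LinearEquiv.coe_coe, rid_tmul] at h
  rw [εs'_eq_sum_s9 hrep, map_sum]
  simp only [map_smul, h, hrep, Finset.sum_mul, Algebra.TensorProduct.tmul_mul_tmul, mul_one,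
    Finset.mul_sum, tmul_sum, mul_smul_comm, tmul_smul, Finset.smul_sum]
  exact Finset.sum_comm

theorem comul_εs'_eq_mul_comul_one (a : H) :
    W.comul (W.εs' a) = ((1 : H) ⊗ₜ[k] W.εs' a) * W.comul 1 := by
  obtain ⟨S, hrep⟩ := TensorProduct.exists_finset (W.comul 1)
  have h := congrArg ((TensorProduct.rid k (H ⊗[k] H)).toLinearMap ∘ₗ
      (W.counit ∘ₗ LinearMap.mulRight k a).lTensor (H ⊗[k] H))
    (sum_comul_tmul_eq_of_sum_tmul_comul_eq hrep (sum_tmul_comul_eq_right hrep))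
  simp only [map_sum, LinearMap.coe_comp, Function.comp_apply, LinearMap.lTensor_tmul,
    LinearMap.mulRight_apply, LinearEquiv.coe_coe, rid_tmul] at h
  rw [εs'_eq_sum_s9 hrep, map_sum]
  simp only [map_smul, h, hrep, Finset.mul_sum, Algebra.TensorProduct.tmul_mul_tmul, one_mul,
    Finset.sum_mul, tmul_sum, smul_mul_assoc, tmul_smul]

theorem comul_εt_eq_comul_one_mul (h : H) :
    W.comul (W.εt h) = W.comul 1 * (W.εt h ⊗ₜ[k] (1 : H)) := by
  obtain ⟨S, hrep⟩ := TensorProduct.exists_finset (W.comul 1)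
  have hw := congrArg ((TensorProduct.lid k (H ⊗[k] H)).toLinearMap ∘ₗ
      (W.counit ∘ₗ LinearMap.mulRight k h).rTensor (H ⊗[k] H)) (sum_tmul_comul_eq_right hrep)
  simp only [map_sum, LinearMap.coe_comp, Function.comp_apply, LinearMap.rTensor_tmul,
    LinearMap.mulRight_apply, LinearEquiv.coe_coe, lid_tmul] at hw
  rw [εt_eq_sum_s9 hrep, map_sum]
  simp only [map_smul, hw, hrep, Finset.sum_mul, Algebra.TensorProduct.tmul_mul_tmul, mul_one,
    Finset.mul_sum, sum_tmul, mul_smul_comm, smul_tmul']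

theorem εs'_mul (x a : H) :
    W.εs' (x * a) = TensorProduct.rid k H
      (TensorProduct.map W.εs' (W.counit ∘ₗ LinearMap.mulRight k a) (W.comul x)) := by
  obtain ⟨S, hrep⟩ := TensorProduct.exists_finset (W.comul 1)
  simp_rw [εs'_eq_sum_s9 hrep, ← mul_assoc, counit_mul_mul]
  induction W.comul x using TensorProduct.induction_on with
  | zero => simp
  | tmul c d => simp [εs'_eq_sum_s9 hrep c, Finset.smul_sum, smul_smul, mul_comm]
  | add p q hp hq => simp only [map_add, add_smul, Finset.sum_add_distrib, hp, hq]

section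

variable {W}

theorem sum_εs'_mul_tmul (hrep : W.comul 1 = ∑ i ∈ s, u i ⊗ₜ[k] v i) (a : H) :
    ∑ i ∈ s, W.εs' (u i * a) ⊗ₜ[k] v i = ∑ i ∈ s, u i ⊗ₜ[k] W.εt (v i * a) := by
  have hc := congrArg (LinearMap.rTensor H ((TensorProduct.rid k H).toLinearMap ∘ₗ
      TensorProduct.map W.εs' (W.counit ∘ₗ LinearMap.mulRight k a)))
    (sum_comul_tmul_eq_of_sum_tmul_comul_eq hrep (sum_tmul_comul_eq_right hrep))
  have hs := congrArg (LinearMap.lTensor H (W.εt ∘ₗ LinearMap.mulRight k a))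
    W.rTensor_εs'_comul_one
  simp only [hrep, map_sum, LinearMap.rTensor_tmul, LinearMap.lTensor_tmul, LinearMap.coe_comp,
    Function.comp_apply, LinearMap.mulRight_apply] at hs
  calc ∑ i ∈ s, W.εs' (u i * a) ⊗ₜ[k] v i
      = ∑ i ∈ s, ∑ j ∈ s, W.counit (u j * v i * a) • (W.εs' (u i) ⊗ₜ[k] v j) := by
        simpa [εs'_mul, smul_tmul'] using hc
    _ = ∑ i ∈ s, W.εs' (u i) ⊗ₜ[k] W.εt (v i * a) := by
        simp only [εt_eq_sum_s9 hrep, tmul_sum, tmul_smul, mul_assoc]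
    _ = ∑ i ∈ s, u i ⊗ₜ[k] W.εt (v i * a) := hs

theorem sum_εs'_εt_mul_eq_one (hrep : W.comul 1 = ∑ i ∈ s, u i ⊗ₜ[k] v i) :
    ∑ i ∈ s, W.εs' (W.εt (v i)) * u i = 1 := by
  have h := congrArg (LinearMap.mul' k H ∘ₗ (TensorProduct.comm k H H).toLinearMap ∘ₗ
    W.εs'.lTensor H) W.lTensor_εt_comul_one
  simp only [hrep, map_sum, LinearMap.coe_comp, Function.comp_apply, LinearMap.lTensor_tmul,
    LinearEquiv.coe_coe, comm_tmul, LinearMap.mul'_apply] at h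
  rw [h, ← W.rcounit_comul 1, ← W.comul_one_mul_comul 1, hrep, Finset.sum_mul_sum]
  simp [εs'_eq_sum_s9 hrep, Finset.sum_mul, Algebra.TensorProduct.tmul_mul_tmul]
  exact Finset.sum_comm

end

theorem rTensor_εs'_comul_one_mul (T : H ⊗[k] H) :
    W.εs'.rTensor H (W.comul 1 * T) =
      (W.lcounit ∘ₗ LinearMap.mulRight k T ∘ₗ W.comul).lTensor H (W.comul 1) := by
  obtain ⟨S, hrep⟩ := TensorProduct.exists_finset (W.comul 1)
  induction T using TensorProduct.induction_on with
  | zero => simp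
  | add p q hp hq =>
      rw [mul_add, map_add, hp, hq, ← LinearMap.add_apply, ← LinearMap.lTensor_add]
      congr 2
      ext x
      simp [mul_add]
  | tmul a b =>
      have hw := congrArg (LinearMap.lTensor H (W.lcounit ∘ₗ LinearMap.mulRight k (a ⊗ₜ[k] b)))
        (sum_tmul_comul_eq_right hrep)
      have hJ := congrArg (LinearMap.mulRight k ((1 : H) ⊗ₜ[k] b)) (sum_εs'_mul_tmul hrep a)
      simp only [map_sum, LinearMap.lTensor_tmul, LinearMap.coe_comp, Function.comp_apply,
        LinearMap.mulRight_apply, Algebra.TensorProduct.tmul_mul_tmul, lcounit_tmul] at hw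
      simp only [map_sum, LinearMap.mulRight_apply, Algebra.TensorProduct.tmul_mul_tmul,
        mul_one] at hJ
      simp only [hrep, map_sum, Finset.sum_mul, Algebra.TensorProduct.tmul_mul_tmul,
        LinearMap.rTensor_tmul, LinearMap.lTensor_tmul, LinearMap.coe_comp, Function.comp_apply,
        LinearMap.mulRight_apply, hJ, hw, εt_eq_sum_s9 hrep, tmul_sum, smul_mul_assoc, mul_assoc]

theorem rTensor_εs'_comul (h : H) :
    W.εs'.rTensor H (W.comul h) = W.comul 1 * ((1 : H) ⊗ₜ[k] h) := by
  have hcounit : W.lcounit ∘ₗ LinearMap.mulRight k (W.comul h) ∘ₗ W.comul =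
      LinearMap.mulRight k h := by
    ext x
    simp [← W.comul_mul]
  rw [← W.comul_one_mul_comul h, rTensor_εs'_comul_one_mul, hcounit,
    Algebra.TensorProduct.mul_one_tmul_eq_lTensor]

theorem εs'_eq_self_of_comul_eq {y : H} (hy : W.comul y = W.comul 1 * ((1 : H) ⊗ₜ[k] y)) :
    W.εs' y = y := by
  rw [εs'_eq_rcounit, ← hy, rcounit_comul]

theorem comul_one_mul_one_tmul_εs' (a : H) :
    W.comul 1 * ((1 : H) ⊗ₜ[k] W.εs' a) = ((1 : H) ⊗ₜ[k] W.εs' a) * W.comul 1 := by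
  rw [← comul_εs'_eq_comul_one_mul, comul_εs'_eq_mul_comul_one]

theorem comul_εs'_mul_εs' (a b : H) :
    W.comul (W.εs' a * W.εs' b) = W.comul 1 * ((1 : H) ⊗ₜ[k] (W.εs' a * W.εs' b)) := by
  rw [W.comul_mul, comul_εs'_eq_comul_one_mul, comul_εs'_eq_comul_one_mul, mul_assoc,
    ← mul_assoc ((1 : H) ⊗ₜ[k] _), ← comul_one_mul_one_tmul_εs', mul_assoc,
    ← mul_assoc (W.comul 1), W.comul_one_mul_comul, Algebra.TensorProduct.tmul_mul_tmul,
    one_mul]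

theorem rcounit_mul_comul_one_mul_εs' (x b : H) :
    W.rcounit (((1 : H) ⊗ₜ[k] x) * W.comul 1 * ((1 : H) ⊗ₜ[k] W.εs' b)) =
      W.rcounit (((1 : H) ⊗ₜ[k] x) * W.comul 1 * ((1 : H) ⊗ₜ[k] b)) := by
  obtain ⟨S, hrep⟩ := TensorProduct.exists_finset (W.comul 1)
  have hw := congrArg ((TensorProduct.rid k H).toLinearMap ∘ₗ (W.counitForm x b).lTensor H)
    (sum_tmul_comul_eq_left hrep)
  simp only [map_sum, LinearMap.coe_comp, Function.comp_apply, LinearMap.lTensor_tmul,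
    LinearEquiv.coe_coe, rid_tmul, counitForm_tmul] at hw
  calc W.rcounit (((1 : H) ⊗ₜ[k] x) * W.comul 1 * ((1 : H) ⊗ₜ[k] W.εs' b))
      = ∑ i ∈ S, ∑ j ∈ S, (W.counit (x * (i.2 * j.1)) * W.counit (j.2 * b)) • i.1 := by
        simp [hrep, εs'_eq_sum_s9 hrep b, Finset.mul_sum, Finset.sum_mul,
          Algebra.TensorProduct.tmul_mul_tmul, Finset.sum_smul, mul_assoc, mul_comm]
    _ = ∑ i ∈ S, W.counitForm x b (W.comul i.2) • i.1 := hw.symm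
    _ = W.rcounit (((1 : H) ⊗ₜ[k] x) * W.comul 1 * ((1 : H) ⊗ₜ[k] b)) := by
        simp [hrep, Finset.mul_sum, Finset.sum_mul, Algebra.TensorProduct.tmul_mul_tmul,
          counit_mul_mul]

theorem εs'_εs'_mul (a b : H) : W.εs' (W.εs' a * b) = W.εs' a * W.εs' b := by
  have hcomm : ∀ c : H, W.εs' (W.εs' a * c) =
      W.rcounit (((1 : H) ⊗ₜ[k] W.εs' a) * W.comul 1 * ((1 : H) ⊗ₜ[k] c)) := fun c => by
    rw [εs'_eq_rcounit, ← comul_one_mul_one_tmul_εs', mul_assoc,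
      Algebra.TensorProduct.tmul_mul_tmul, one_mul]
  rw [hcomm, ← rcounit_mul_comul_one_mul_εs', ← hcomm,
    εs'_eq_self_of_comul_eq _ (comul_εs'_mul_εs' _ a b)]

theorem rTensor_εs'_comul_one_mul_tmul_one (y : H) :
    W.εs'.rTensor H (W.comul 1 * (y ⊗ₜ[k] (1 : H))) = W.comul 1 * (W.εs' y ⊗ₜ[k] (1 : H)) := by
  have hmap : W.εs' ∘ₗ LinearMap.mulRight k y ∘ₗ W.εs' =
      LinearMap.mulRight k (W.εs' y) ∘ₗ W.εs' := by
    ext a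
    exact W.εs'_εs'_mul a y
  rw [Algebra.TensorProduct.mul_tmul_one_eq_rTensor, Algebra.TensorProduct.mul_tmul_one_eq_rTensor,
    ← W.rTensor_εs'_comul_one, ← LinearMap.rTensor_comp_apply, ← LinearMap.rTensor_comp_apply,
    ← LinearMap.rTensor_comp_apply, LinearMap.comp_assoc, hmap]

theorem comul_one_mul_εs'_εt_tmul_one (h : H) :
    W.comul 1 * (W.εs' (W.εt h) ⊗ₜ[k] (1 : H)) = W.comul 1 * ((1 : H) ⊗ₜ[k] W.εt h) := by
  rw [← rTensor_εs'_comul_one_mul_tmul_one, ← comul_εt_eq_comul_one_mul, rTensor_εs'_comul]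

end WeakBialgebra

section TensorAction

variable (k H M N : Type*) [CommRing k] [Ring H] [Algebra k H]
  [AddCommGroup M] [Module k M] [Module H M] [IsScalarTower k H M]
  [AddCommGroup N] [Module k N] [Module H N] [IsScalarTower k H N]

noncomputable def tensorAction : H ⊗[k] H →ₗ[k] M ⊗[k] N →ₗ[k] M ⊗[k] N :=
  TensorProduct.homTensorHomMap (RingHom.id k) M N M N ∘ₗ TensorProduct.map lsmulL lsmulL

variable {k H M N}

theorem tensorAction_tmul (a b : H) :
    tensorAction k H M N (a ⊗ₜ[k] b) = TensorProduct.map (lsmulM a) (lsmulM b) := by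
  simp only [tensorAction, LinearMap.coe_comp, Function.comp_apply, map_tmul,
    TensorProduct.homTensorHomMap_apply]
  rfl

theorem tensorAction_tmul_tmul (a b : H) (m : M) (n : N) :
    tensorAction k H M N (a ⊗ₜ[k] b) (m ⊗ₜ[k] n) = (a • m) ⊗ₜ[k] (b • n) := by
  rw [tensorAction_tmul]
  rfl

theorem tensorAction_mul (x y : H ⊗[k] H) (w : M ⊗[k] N) :
    tensorAction k H M N (x * y) w = tensorAction k H M N x (tensorAction k H M N y w) := by
  induction x using TensorProduct.induction_on with
  | zero => simp
  | add x₁ x₂ h₁ h₂ => simp only [add_mul, map_add, LinearMap.add_apply, h₁, h₂]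
  | tmul a b =>
      induction y using TensorProduct.induction_on with
      | zero => simp
      | add y₁ y₂ h₁ h₂ => simp only [mul_add, map_add, LinearMap.add_apply, h₁, h₂]
      | tmul c d =>
          induction w using TensorProduct.induction_on with
          | zero => simp
          | add w₁ w₂ h₁ h₂ => simp only [map_add, h₁, h₂]
          | tmul m n =>
              simp only [Algebra.TensorProduct.tmul_mul_tmul, tensorAction_tmul_tmul, mul_smul]

end TensorAction

namespace WeakBialgebra

variable {k H : Type*} [CommRing k] [Ring H] [Algebra k H] (W : WeakBialgebra k H)
  (M N : Type*) [AddCommGroup M] [Module k M] [Module H M] [IsScalarTower k H M]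
  [AddCommGroup N] [Module k N] [Module H N] [IsScalarTower k H N]

/-- Generators of the kernel of `M ⊗_k N → M ⊗_{H_t} N`. -/
def balancingRel : Set (M ⊗[k] N) :=
  {x | ∃ z ∈ Set.range W.εt, ∃ (m : M) (n : N), x = (W.εs' z • m) ⊗ₜ[k] n - m ⊗ₜ[k] (z • n)}

theorem span_balancingRel_le_ker :
    Submodule.span k (W.balancingRel M N) ≤ LinearMap.ker (tensorAction k H M N (W.comul 1)) := by
  refine Submodule.span_le.mpr ?_
  rintro _ ⟨_, ⟨h, rfl⟩, m, n, rfl⟩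
  have hleft : (W.εs' (W.εt h) • m) ⊗ₜ[k] n =
      tensorAction k H M N (W.εs' (W.εt h) ⊗ₜ[k] (1 : H)) (m ⊗ₜ[k] n) := by
    rw [tensorAction_tmul_tmul, one_smul]
  have hright : m ⊗ₜ[k] (W.εt h • n) =
      tensorAction k H M N ((1 : H) ⊗ₜ[k] W.εt h) (m ⊗ₜ[k] n) := by
    rw [tensorAction_tmul_tmul, one_smul]
  rw [SetLike.mem_coe, LinearMap.mem_ker, map_sub, sub_eq_zero, hleft, hright,
    ← tensorAction_mul, ← tensorAction_mul, comul_one_mul_εs'_εt_tmul_one]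

theorem sub_tensorAction_comul_one_mem_span (x : M ⊗[k] N) :
    x - tensorAction k H M N (W.comul 1) x ∈ Submodule.span k (W.balancingRel M N) := by
  obtain ⟨S, hrep⟩ := TensorProduct.exists_finset (W.comul 1)
  induction x using TensorProduct.induction_on with
  | zero => simp
  | add x y hx hy => simpa only [map_add, add_sub_add_comm] using add_mem hx hy
  | tmul m n =>
      have hone : m ⊗ₜ[k] n = ∑ i ∈ S, (W.εs' (W.εt i.2) • i.1 • m) ⊗ₜ[k] n := by
        simp_rw [smul_smul, ← sum_tmul, ← Finset.sum_smul, sum_εs'_εt_mul_eq_one hrep, one_smul]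
      have hact : tensorAction k H M N (W.comul 1) (m ⊗ₜ[k] n) =
          ∑ i ∈ S, (i.1 • m) ⊗ₜ[k] (W.εt i.2 • n) := by
        rw [← W.lTensor_εt_comul_one, hrep]
        simp [map_sum, tensorAction_tmul_tmul]
      rw [hact, hone, ← Finset.sum_sub_distrib]
      exact Submodule.sum_mem _ fun i _ =>
        Submodule.subset_span ⟨W.εt i.2, ⟨i.2, rfl⟩, i.1 • m, n, rfl⟩

theorem ker_tensorAction_comul_one :
    LinearMap.ker (tensorAction k H M N (W.comul 1)) = Submodule.span k (W.balancingRel M N) :=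
  LinearMap.ker_eq_of_le_ker_of_sub_mem (W.span_balancingRel_le_ker M N)
    (W.sub_tensorAction_comul_one_mem_span M N)

end WeakBialgebra

/-- For left `H`-modules `M, N` over a weak bialgebra `H`, the projection
`π(m ⊗ n) = 1₍₁₎m ⊗ 1₍₂₎n` induces an isomorphism `M ⊗_{H_t} N ≅ Δ(1)(M ⊗ N)`,
where the right `H_t`-action on `M` is `m·z = ε̄_s(z)m`.  Here `M ⊗_{H_t} N` is
realized as the quotient of `M ⊗_k N` by the span of the balancing relations. -/
theorem weakBialgebra_truncated_tensor_iso
    {k H M N : Type*} [CommRing k] [Ring H] [Algebra k H]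
    [AddCommGroup M] [Module k M] [Module H M] [IsScalarTower k H M]
    [AddCommGroup N] [Module k N] [Module H N] [IsScalarTower k H N]
    (W : WeakBialgebra k H)
    {ι : Type*} (s : Finset ι) (u v : ι → H)
    (hrep : W.comul 1 = ∑ i ∈ s, u i ⊗ₜ[k] v i) :
    ∃ e : (M ⊗[k] N ⧸ Submodule.span k
        {x : M ⊗[k] N | ∃ z ∈ Set.range W.εt, ∃ (m : M) (n : N),
          x = (W.εs' z • m) ⊗ₜ[k] n - m ⊗ₜ[k] (z • n)}) ≃ₗ[k]
      LinearMap.range (∑ i ∈ s, TensorProduct.map (lsmulM (u i)) (lsmulM (v i))),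
      ∀ x : M ⊗[k] N,
        (e (Submodule.Quotient.mk x)).1 =
          (∑ i ∈ s, TensorProduct.map (lsmulM (u i)) (lsmulM (v i))) x := by
  have hP : ∑ i ∈ s, TensorProduct.map (lsmulM (u i)) (lsmulM (v i)) =
      tensorAction k H M N (W.comul 1) := by
    simp only [hrep, map_sum, tensorAction_tmul]
  have hker := W.ker_tensorAction_comul_one M N
  rw [← hP] at hker
  exact ⟨(Submodule.quotEquivOfEq _ _ hker.symm).trans (LinearMap.quotKerEquivRange _),
    fun x => rfl⟩
end
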